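/- arXiv:2506.22855 — 2 statements merged into one kernel-verified Lean document; each statement's English description precedes it below -/
import Mathlib

section
/- Let W = [w_{ij}] be an n×n real weight-balanced matrix (for every i, ∑_j w_{ij} = ∑_j w_{ji}), let g : ℝ^m → ℝ^m be any map, and let z_1,…,z_n, G_1,…,G_n : ℝ → ℝ^m be differentiable functions such that for every node i and every time t: z_i'(t) = −∑_{j=1}^n w_{ij} ( g(z_i(t)) − g(z_j(t)) ) + G_i'(t), and such that the initialization satisfies ∑_{i=1}^n z_i(0) = ∑_{i=1}^n G_i(0). Then for all t ≥ 0, ∑_{i=1}^n z_i(t) = ∑_{i=1}^n G_i(t); i.e., the auxiliary variables track the sum of the local gradients at all times. -/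
/-! Summing the dynamics over the nodes, the coupling terms cancel: in
`∑ i, ∑ j, w_ij • (g(z_i) - g(z_j))` each `g(z_i)` appears with weight `∑ j, w_ij` positively and
`∑ j, w_ji` negatively, and weight balance makes these equal. Hence `∑ i, z_i - ∑ i, G_i` has zero
derivative, so it keeps its initial value `0`. -/

open Finset

namespace Matrix

variable {ι R M : Type*} [Fintype ι]

def IsWeightBalanced [AddCommMonoid R] (W : Matrix ι ι R) : Prop :=
  ∀ i, ∑ j, W i j = ∑ j, W j i

theorem IsWeightBalanced.sum_sum_smul_sub_eq_zero [Ring R] [AddCommGroup M] [Module R M]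
    {W : Matrix ι ι R} (hW : W.IsWeightBalanced) (f : ι → M) :
    ∑ i, ∑ j, W i j • (f i - f j) = 0 := by
  have out_eq_in : ∑ i, (∑ j, W i j) • f i = ∑ i, (∑ j, W j i) • f i :=
    sum_congr rfl fun i _ => by rw [hW i]
  simp only [smul_sub, sum_sub_distrib, sum_smul] at out_eq_in ⊢
  rw [sum_comm (f := fun i j => W i j • f j), out_eq_in, sub_self]

end Matrix

theorem sum_eq_sum_of_sum_deriv_eq {ι E : Type*} [Fintype ι] [NormedAddCommGroup E]
    [NormedSpace ℝ E] {z G : ι → ℝ → E} (hz : ∀ i, Differentiable ℝ (z i))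
    (hG : ∀ i, Differentiable ℝ (G i)) (hderiv : ∀ t, ∑ i, deriv (z i) t = ∑ i, deriv (G i) t)
    {t₀ : ℝ} (h₀ : ∑ i, z i t₀ = ∑ i, G i t₀) (t : ℝ) : ∑ i, z i t = ∑ i, G i t := by
  have hzsum : Differentiable ℝ fun t => ∑ i, z i t := .fun_sum fun i _ => hz i
  have hGsum : Differentiable ℝ fun t => ∑ i, G i t := .fun_sum fun i _ => hG i
  have hconst := is_const_of_deriv_eq_zero (hzsum.fun_sub hGsum) (fun s => by
    rw [deriv_fun_sub (hzsum s) (hGsum s), deriv_fun_sum fun i _ => (hz i).differentiableAt,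
      deriv_fun_sum fun i _ => (hG i).differentiableAt, hderiv, sub_self]) t t₀
  rwa [h₀, sub_self, sub_eq_zero] at hconst

/-- Over a weight-balanced network, the gradient-tracking dynamics
`z_i' = -∑_j w_ij (g(z_i) - g(z_j)) + G_i'` together with the initialization
`∑ i, z_i(0) = ∑ i, G_i(0)` implies `∑ i, z_i(t) = ∑ i, G_i(t)` for all `t ≥ 0`:
the auxiliary variables track the sum of the local gradients at all times. -/
theorem gradient_tracking_sum_invariant (n m : ℕ)
    (W : Matrix (Fin n) (Fin n) ℝ)
    (hWB : ∀ i, ∑ j, W i j = ∑ j, W j i)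
    (g : (Fin m → ℝ) → (Fin m → ℝ))
    (z G : Fin n → ℝ → (Fin m → ℝ))
    (hz : ∀ i, Differentiable ℝ (z i)) (hG : ∀ i, Differentiable ℝ (G i))
    (hdyn : ∀ i t, deriv (z i) t
      = -∑ j, W i j • (g (z i t) - g (z j t)) + deriv (G i) t)
    (hinit : ∑ i, z i 0 = ∑ i, G i 0) :
    ∀ t : ℝ, 0 ≤ t → ∑ i, z i t = ∑ i, G i t := by
  have hW : W.IsWeightBalanced := hWB
  refine fun t _ => sum_eq_sum_of_sum_deriv_eq hz hG (fun s => ?_) hinit t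
  simp only [hdyn, sum_add_distrib, sum_neg_distrib,
    hW.sum_sum_smul_sub_eq_zero fun i => g (z i s), neg_zero, zero_add]
end

section
/- Let w < 0 and h > 0 be real numbers, let 0 ≤ β < 1, and let 0 < α ≤ (1−β)²(−w)/h. Then every complex root λ of the equation (w − λ(1−β))(w − λ) + λ α h = 0 (equivalently, of (1−β)λ² − ((2−β)w + αh)λ + w² = 0) has strictly negative real part. -/
/-- Scalar instance of the stability condition of Theorem 1: for `w < 0`,
`h > 0`, `0 ≤ β < 1` and `0 < α ≤ (1-β)²(-w)/h`, every complex root `λ` of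
`(w - λ(1-β))(w - λ) + λαh = 0` has strictly negative real part. -/
theorem scalar_hbnp_gt_stability (w h α β : ℝ)
    (hw : w < 0) (hh : 0 < h) (hβ0 : 0 ≤ β) (hβ1 : β < 1)
    (hα0 : 0 < α) (hα : α ≤ (1 - β) ^ 2 * (-w) / h) :
    ∀ lam : ℂ,
      ((w : ℂ) - lam * (1 - (β : ℂ))) * ((w : ℂ) - lam) + lam * (α : ℂ) * (h : ℂ) = 0 →
      lam.re < 0 := by
  intro lam heq
  have hre := congrArg Complex.re heq
  have him := congrArg Complex.im heq
  simp [Complex.add_re, Complex.add_im, Complex.mul_re, Complex.mul_im,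
    Complex.sub_re, Complex.sub_im, Complex.one_re, Complex.one_im,
    Complex.ofReal_re, Complex.ofReal_im] at hre him
  set x := lam.re
  set y := lam.im
  by_contra hx
  push_neg at hx
  have hb : 0 < α * h - (2 - β) * w := by nlinarith
  have hy : y = 0 := by
    rcases mul_eq_zero.mp (show y * (2 * (1 - β) * x + (α * h - (2 - β) * w)) = 0 by nlinarith) with h1 | h2
    · exact h1
    · nlinarith
  rw [hy] at hre
  nlinarith [sq_nonneg x]
end
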